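/- Let aB ∈ (π/(2√2), π/2) satisfy √2·tan(√2·aB) = -tan(aB), and let q₁, q₂ be as in the explicit two-phase eigenfunction. Then ∫_{-a}^0 q₁(x) dx / ∫_0^a q₂(x) dx > 1/(2√(2-√2) - 2 + √2) > 1; in particular the mass of the stationary distribution on the high-survival side (-a,0) strictly exceeds the mass on the high-birth side (0,a). -/

import Mathlib

open Real MeasureTheory

/-- The left piece of the explicit two-phase eigenfunction. -/
noncomputable def q₁ (a B : ℝ) : ℝ → ℝ := fun x =>
  -(Real.sqrt 2 / B) * Real.cos (Real.sqrt 2 * B * x) *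
    (Real.tan (Real.sqrt 2 * B * x) + Real.tan (Real.sqrt 2 * (a * B)))

/-- The right piece of the explicit two-phase eigenfunction. -/
noncomputable def q₂ (a B : ℝ) : ℝ → ℝ := fun x =>
  (1 / B) * Real.cos (B * x) * (Real.tan (a * B) - Real.tan (B * x))

lemma dbl_bounds {x slo shi clo chi slo' shi' clo' chi' : ℝ}
    (h1 : slo ≤ Real.sin x) (h2 : Real.sin x ≤ shi)
    (h3 : clo ≤ Real.cos x) (h4 : Real.cos x ≤ chi)
    (h5 : 0 ≤ slo) (h6 : 0 ≤ clo)
    (e1 : slo' ≤ 2*slo*clo) (e2 : 2*shi*chi ≤ shi')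
    (e3 : clo' ≤ 1-2*shi^2) (e4 : 1-2*slo^2 ≤ chi') :
    slo' ≤ Real.sin (2*x) ∧ Real.sin (2*x) ≤ shi' ∧
    clo' ≤ Real.cos (2*x) ∧ Real.cos (2*x) ≤ chi' := by
  have hp := Real.sin_sq_add_cos_sq x
  rw [Real.sin_two_mul, Real.cos_two_mul]
  refine ⟨by nlinarith, by nlinarith, by nlinarith, by nlinarith⟩


lemma bounds_1344 :
    0.973906585 ≤ Real.sin 1.344 ∧ Real.sin 1.344 ≤ 0.974843656 ∧
    0.224422742 ≤ Real.cos 1.344 ∧ Real.cos 1.344 ≤ 0.225413645 := by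
  have habs : |(0.168:ℝ)| ≤ 1 := by rw [abs_of_pos] <;> norm_num
  have hsb := abs_le.mp (Real.sin_bound habs)
  have hcb := abs_le.mp (Real.cos_bound habs)
  rw [abs_of_pos (by norm_num : (0:ℝ) < 0.168)] at hsb hcb
  have a1 : (0.167168238:ℝ) ≤ Real.sin 0.168 := by nlinarith [hsb.1]
  have a2 : Real.sin 0.168 ≤ 0.167251218 := by nlinarith [hsb.2]
  have a3 : (0.985846510:ℝ) ≤ Real.cos 0.168 := by nlinarith [hcb.1]
  have a4 : Real.cos 0.168 ≤ 0.985929490 := by nlinarith [hcb.2]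
  have e336 : (0.336:ℝ) = 2*0.168 := by norm_num
  have e672 : (0.672:ℝ) = 2*0.336 := by norm_num
  have e1344 : (1.344:ℝ) = 2*0.672 := by norm_num
  have h336 : (0.329604448:ℝ) ≤ Real.sin 0.336 ∧ Real.sin 0.336 ≤ 0.329795817 ∧
      (0.944054060:ℝ) ≤ Real.cos 0.336 ∧ Real.cos 0.336 ≤ 0.944109561 := by
    rw [e336]
    exact dbl_bounds a1 a2 a3 a4 (by norm_num) (by norm_num)
      (by norm_num) (by norm_num) (by norm_num) (by norm_num)
  obtain ⟨b1, b2, b3, b4⟩ := h336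
  have h672 : (0.622328834:ℝ) ≤ Real.sin 0.672 ∧ Real.sin 0.672 ≤ 0.622726769 ∧
      (0.782469438:ℝ) ≤ Real.cos 0.672 ∧ Real.cos 0.672 ≤ 0.782721816 := by
    rw [e672]
    exact dbl_bounds b1 b2 b3 b4 (by norm_num) (by norm_num)
      (by norm_num) (by norm_num) (by norm_num) (by norm_num)
  obtain ⟨c1, c2, c3, c4⟩ := h672
  rw [e1344]
  exact dbl_bounds c1 c2 c3 c4 (by norm_num) (by norm_num)
    (by norm_num) (by norm_num) (by norm_num) (by norm_num)

lemma sqrt2_bounds : 1.41421356 ≤ Real.sqrt 2 ∧ Real.sqrt 2 ≤ 1.41421357 := by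
  have h2 : (Real.sqrt 2)^2 = 2 := Real.sq_sqrt (by norm_num)
  have h0 := Real.sqrt_nonneg 2
  constructor <;> nlinarith


set_option maxHeartbeats 1000000 in
lemma bounds_1344s :
    0.943959767 ≤ Real.sin (1.344 * Real.sqrt 2) ∧ Real.sin (1.344 * Real.sqrt 2) ≤ 0.948335216 ∧
    (-0.326326324:ℝ) ≤ Real.cos (1.344 * Real.sqrt 2) ∧ Real.cos (1.344 * Real.sqrt 2) ≤ -0.320758837 := by
  obtain ⟨hsl, hsu⟩ := sqrt2_bounds
  have h2 : (Real.sqrt 2)^2 = 2 := Real.sq_sqrt (by norm_num)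
  set s := Real.sqrt 2 with hs
  have habs : |(0.168*s:ℝ)| ≤ 1 := by
    rw [abs_of_pos (by nlinarith)]; nlinarith
  have hsb := abs_le.mp (Real.sin_bound habs)
  have hcb := abs_le.mp (Real.cos_bound habs)
  rw [abs_of_pos (by nlinarith : (0:ℝ) < 0.168*s)] at hsb hcb
  have hp3 : (0.168*s)^3 = 0.168^3*2*s := by
    have h3 : s^3 = 2*s := by rw [pow_succ, h2]
    rw [mul_pow, h3]; ring
  have hp4 : (0.168*s)^4 = 0.168^4*4 := by
    have h4 : s^4 = 4 := by rw [show s^4 = (s^2)^2 by ring, h2]; norm_num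
    rw [mul_pow, h4]
  have hp2 : (0.168*s)^2 = 0.168^2*2 := by rw [mul_pow, h2]
  have hp5 : (0.168*s)^5 = 0.168^5*4*s := by
    rw [mul_pow, show s^5 = (s^2)^2*s by ring, h2]; ring
  rw [hp3, hp5] at hsb
  rw [hp2, hp4] at hcb
  have a1 : (0.235186694:ℝ) ≤ Real.sin (0.168*s) := by linarith [hsb.1]
  have a2 : Real.sin (0.168*s) ≤ 0.235518611 := by linarith [hsb.2]
  have a3 : (0.971610042:ℝ) ≤ Real.cos (0.168*s) := by linarith [hcb.1]
  have a4 : Real.cos (0.168*s) ≤ 0.971941958 := by linarith [hcb.2]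
  have e336 : (0.336:ℝ)*s = 2*(0.168*s) := by ring
  have e672 : (0.672:ℝ)*s = 2*(0.336*s) := by ring
  have e1344 : (1.344:ℝ)*s = 2*(0.672*s) := by ring
  have h336 : (0.457019507:ℝ) ≤ Real.sin (0.336*s) ∧ Real.sin (0.336*s) ≤ 0.457820840 ∧
      (0.889061967:ℝ) ≤ Real.cos (0.336*s) ∧ Real.cos (0.336*s) ≤ 0.889374438 := by
    rw [e336]
    exact dbl_bounds a1 a2 a3 a4 (by norm_num) (by norm_num)
      (by norm_num) (by norm_num) (by norm_num) (by norm_num)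
  obtain ⟨b1, b2, b3, b4⟩ := h336
  have h672 : (0.812637323:ℝ) ≤ Real.sin (0.672*s) ∧ Real.sin (0.672*s) ≤ 0.814348305 ∧
      (0.580800156:ℝ) ≤ Real.cos (0.672*s) ∧ Real.cos (0.672*s) ≤ 0.582266341 := by
    rw [e672]
    exact dbl_bounds b1 b2 b3 b4 (by norm_num) (by norm_num)
      (by norm_num) (by norm_num) (by norm_num) (by norm_num)
  obtain ⟨c1, c2, c3, c4⟩ := h672
  rw [e1344]
  exact dbl_bounds c1 c2 c3 c4 (by norm_num) (by norm_num)
    (by norm_num) (by norm_num) (by norm_num) (by norm_num)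

lemma sqrt2_bounds' : 1.41421356 ≤ Real.sqrt 2 ∧ Real.sqrt 2 ≤ 1.41421357 := by
  have h2 : (Real.sqrt 2)^2 = 2 := Real.sq_sqrt (by norm_num)
  have h0 := Real.sqrt_nonneg 2
  constructor <;> nlinarith

set_option maxHeartbeats 1000000 in
lemma final_algebra (B bb cc : ℝ) (hB : 0 < B)
    (hsl : 1.41421356 ≤ Real.sqrt 2) (hsu : Real.sqrt 2 ≤ 1.41421357)
    (hcosb_pos : 0 < Real.cos bb) (hcosc_neg : Real.cos cc < 0)
    (hu_lo : (0.224422742:ℝ) < Real.cos bb) (hu_hi : Real.cos bb < 1)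
    (hv_lo : (-0.326326324:ℝ) < Real.cos cc) :
    (1/B^2) * (1 - Real.cos cc - Real.tan cc * Real.sin cc) /
      ((1/B^2) * (Real.tan bb * Real.sin bb + Real.cos bb - 1)) >
      1 / (2 * Real.sqrt (2 - Real.sqrt 2) - 2 + Real.sqrt 2) ∧
    1 / (2 * Real.sqrt (2 - Real.sqrt 2) - 2 + Real.sqrt 2) > 1 := by
  set s : ℝ := Real.sqrt 2 with hs_def
  have hpy_b := Real.sin_sq_add_cos_sq bb
  have hpy_c := Real.sin_sq_add_cos_sq cc
  have hcb_ne : Real.cos bb ≠ 0 := ne_of_gt hcosb_pos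
  have hcc_ne : Real.cos cc ≠ 0 := ne_of_lt hcosc_neg
  have hB_ne : B ≠ 0 := ne_of_gt hB
  have h1mu : (0:ℝ) < 1 - Real.cos bb := by linarith
  have hI1val : (1/B^2) * (1 - Real.cos cc - Real.tan cc * Real.sin cc)
      = (Real.cos cc - 1)/(Real.cos cc * B^2) := by
    rw [Real.tan_eq_sin_div_cos]
    field_simp
    linear_combination (-1) * hpy_c
  have hI2val : (1/B^2) * (Real.tan bb * Real.sin bb + Real.cos bb - 1)
      = (1 - Real.cos bb)/(Real.cos bb * B^2) := by
    rw [Real.tan_eq_sin_div_cos]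
    field_simp
    linear_combination hpy_b
  rw [hI1val, hI2val]
  have h2s : (0:ℝ) ≤ 2 - s := by linarith
  have hw2 : (Real.sqrt (2-s))^2 = 2 - s := Real.sq_sqrt h2s
  have hw0 : 0 ≤ Real.sqrt (2-s) := Real.sqrt_nonneg _
  have hwl : 0.7653668 ≤ Real.sqrt (2-s) := by nlinarith
  have hwu : Real.sqrt (2-s) ≤ 0.7653669 := by nlinarith
  have hK : (0:ℝ) < 2 * Real.sqrt (2-s) - 2 + s := by linarith
  constructor
  · rw [gt_iff_lt]
    have hden : (0:ℝ) < -Real.cos cc * (1 - Real.cos bb) := mul_pos (by linarith) h1mu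
    have hratio : (Real.cos cc - 1)/(Real.cos cc * B^2) / ((1 - Real.cos bb)/(Real.cos bb * B^2))
        = ((1 - Real.cos cc) * Real.cos bb) / (-Real.cos cc * (1 - Real.cos bb)) := by
      field_simp
      ring
    rw [hratio, div_lt_div_iff₀ hK hden]
    have hstep : 1 * (-Real.cos cc * (1 - Real.cos bb))
        < 0.94494716 * ((1 - Real.cos cc) * Real.cos bb) := by
      nlinarith [mul_nonneg (by linarith : (0:ℝ) ≤ Real.cos bb - 0.224422742) (by linarith : (0:ℝ) ≤ -Real.cos cc),
                 mul_nonneg (by linarith : (0:ℝ) ≤ Real.cos bb - 0.224422742) (by linarith : (0:ℝ) ≤ Real.cos cc + 0.326326324),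
                 mul_nonneg (by linarith : (0:ℝ) ≤ 1 - Real.cos bb) (by linarith : (0:ℝ) ≤ -Real.cos cc),
                 mul_nonneg (by linarith : (0:ℝ) ≤ 1 - Real.cos bb) (by linarith : (0:ℝ) ≤ Real.cos cc + 0.326326324)]
    have hpos : (0:ℝ) < (1 - Real.cos cc) * Real.cos bb := mul_pos (by linarith) hcosb_pos
    have hmono := mul_le_mul_of_nonneg_right
      (by linarith : (0.94494716:ℝ) ≤ 2 * Real.sqrt (2-s) - 2 + s) (le_of_lt hpos)
    linarith [hstep, hmono]
  · rw [gt_iff_lt, lt_div_iff₀ hK, one_mul]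
    linarith

set_option maxHeartbeats 1600000 in
/-- The mass on the high-survival side (-a,0) exceeds that on the high-birth side (0,a):
∫_{-a}^0 q₁ / ∫_0^a q₂ > 1/(2√(2-√2) - 2 + √2) > 1. -/
theorem stmt11 (a B : ℝ) (ha : 0 < a) (hB : 0 < B)
    (hmem : a * B ∈ Set.Ioo (π / (2 * Real.sqrt 2)) (π / 2))
    (hmatch : Real.sqrt 2 * Real.tan (Real.sqrt 2 * (a * B)) = - Real.tan (a * B)) :
    (∫ x in Set.Ioo (-a) 0, q₁ a B x) / (∫ x in Set.Ioo 0 a, q₂ a B x) >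
      1 / (2 * Real.sqrt (2 - Real.sqrt 2) - 2 + Real.sqrt 2) ∧
    1 / (2 * Real.sqrt (2 - Real.sqrt 2) - 2 + Real.sqrt 2) > 1 := by
  simp only [q₁, q₂]
  obtain ⟨hb1, hb2⟩ := hmem
  obtain ⟨hsl, hsu⟩ := sqrt2_bounds'
  have hs2 : (Real.sqrt 2)^2 = 2 := Real.sq_sqrt (by norm_num)
  set s : ℝ := Real.sqrt 2 with hs_def
  have hs0 : 0 < s := by linarith
  have hpl : 3.141592 < π := Real.pi_gt_d6
  have hpu : π < 3.15 := Real.pi_lt_d2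
  set b : ℝ := a * B with hb_def
  have hb0 : 0 < b := mul_pos ha hB
  have hblo : 1.11 < b := by
    have h : π / (2*s) > 1.11 := by
      rw [gt_iff_lt, lt_div_iff₀ (by linarith)]; nlinarith
    linarith
  have hbhi : b < 1.575 := by
    have : π/2 < 1.575 := by linarith
    linarith
  set c : ℝ := s * b with hc_def
  have hc1 : π/2 < c := by
    have : s * (π/(2*s)) = π/2 := by field_simp
    nlinarith
  have hcub : c < s * 1.575 := by
    exact mul_lt_mul_of_pos_left hbhi hs0
  have hc2 : c < 2.23 := by nlinarith
  have hcpi : c < π := by linarith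
  have hcosb_pos : 0 < Real.cos b := Real.cos_pos_of_mem_Ioo ⟨by linarith, hb2⟩
  have hcosc_neg : Real.cos c < 0 := Real.cos_neg_of_pi_div_two_lt_of_lt hc1 (by linarith)
  have hsinb_pos : 0 < Real.sin b := Real.sin_pos_of_pos_of_lt_pi hb0 (by linarith)
  have hsinc_pos : 0 < Real.sin c := Real.sin_pos_of_pos_of_lt_pi (by nlinarith) hcpi
  -- matching in sin/cos form
  have hmatch' : s * Real.sin c * Real.cos b = -(Real.sin b * Real.cos c) := by
    rw [Real.tan_eq_sin_div_cos, Real.tan_eq_sin_div_cos] at hmatch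
    have h := hmatch
    field_simp at h
    rw [div_eq_iff (ne_of_lt hcosc_neg)] at h
    linarith [h]
  -- Step C : b < 1.344
  obtain ⟨B1, B2, B3, B4⟩ := bounds_1344
  obtain ⟨S1, S2, S3, S4⟩ := bounds_1344s
  have hb_lt : b < 1.344 := by
    by_contra hcon
    push_neg at hcon
    have hcb_le : Real.cos b ≤ Real.cos 1.344 :=
      Real.cos_le_cos_of_nonneg_of_le_pi (by norm_num) (by linarith) hcon
    have hcc_le : Real.cos c ≤ Real.cos (1.344 * s) :=
      Real.cos_le_cos_of_nonneg_of_le_pi (by nlinarith) (by linarith)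
        (by nlinarith [mul_le_mul_of_nonneg_left hcon (le_of_lt hs0)])
    have hsb_ge : Real.sin 1.344 ≤ Real.sin b := by
      rw [← Real.cos_pi_div_two_sub, ← Real.cos_pi_div_two_sub]
      exact Real.cos_le_cos_of_nonneg_of_le_pi (by linarith) (by linarith) (by linarith)
    have hsc_le : Real.sin c ≤ Real.sin (1.344 * s) := by
      rw [← Real.cos_sub_pi_div_two, ← Real.cos_sub_pi_div_two]
      exact Real.cos_le_cos_of_nonneg_of_le_pi (by nlinarith) (by linarith)
        (by nlinarith [mul_le_mul_of_nonneg_left hcon (le_of_lt hs0)])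
    have t1 : s * Real.sin c * Real.cos b ≤ 1.41421357 * 0.948335216 * 0.225413645 := by
      have h1 : Real.sin c ≤ 0.948335216 := le_trans hsc_le S2
      have h2 : Real.cos b ≤ 0.225413645 := le_trans hcb_le B4
      have m1 : s * Real.sin c ≤ 1.41421357 * 0.948335216 :=
        mul_le_mul hsu h1 (le_of_lt hsinc_pos) (by norm_num)
      have m2 : (s * Real.sin c) * Real.cos b ≤ (1.41421357 * 0.948335216) * 0.225413645 :=
        mul_le_mul m1 h2 (le_of_lt hcosb_pos) (by norm_num)
      linarith
    have t2 : Real.sin b * Real.cos c ≤ 0.973906585 * (-0.320758837) := by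
      have h1 : (0.973906585:ℝ) ≤ Real.sin b := le_trans B1 hsb_ge
      have h2 : Real.cos c ≤ -0.320758837 := le_trans hcc_le S4
      have m1 : Real.sin b * Real.cos c ≤ 0.973906585 * Real.cos c :=
        mul_le_mul_of_nonpos_right h1 (le_of_lt hcosc_neg)
      nlinarith [m1, h2]
    linarith [hmatch', t1, t2]
  -- bounds on cos b, cos c
  have hu_lo : (0.224422742:ℝ) < Real.cos b := by
    have := Real.cos_lt_cos_of_nonneg_of_le_pi (le_of_lt hb0) (by linarith) hb_lt
    linarith
  have hv_lo : (-0.326326324:ℝ) < Real.cos c := by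
    have := Real.cos_lt_cos_of_nonneg_of_le_pi (by nlinarith : (0:ℝ) ≤ c) (by nlinarith) (by nlinarith [mul_lt_mul_of_pos_left hb_lt hs0] : c < 1.344*s)
    linarith
  have hu_hi : Real.cos b < 1 := by
    have := Real.cos_lt_cos_of_nonneg_of_le_pi (le_refl 0) (by linarith) hb0
    rwa [Real.cos_zero] at this
  -- right-side integral
  have hsB : 0 < s * B := mul_pos hs0 hB
  have hInt2 : (∫ x in Set.Ioo 0 a, (1/B) * Real.cos (B*x) * (Real.tan b - Real.tan (B*x)))
      = (1/B^2) * (Real.tan b * Real.sin b + Real.cos b - 1) := by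
    have hcong : (∫ x in Set.Ioo 0 a, (1/B) * Real.cos (B*x) * (Real.tan b - Real.tan (B*x)))
        = ∫ x in Set.Ioo 0 a, (1/B) * (Real.tan b * Real.cos (B*x) - Real.sin (B*x)) := by
      refine MeasureTheory.setIntegral_congr_fun measurableSet_Ioo (fun x hx => ?_)
      obtain ⟨hx1, hx2⟩ := hx
      have hBx1 : 0 < B * x := mul_pos hB hx1
      have hBx2 : B * x < b := by
        rw [hb_def, mul_comm a B]; exact (mul_lt_mul_iff_right₀ hB).mpr hx2
      have hcos_pos : 0 < Real.cos (B*x) := Real.cos_pos_of_mem_Ioo ⟨by linarith, by linarith⟩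
      rw [Real.tan_eq_sin_div_cos (B*x)]
      field_simp
    rw [hcong, ← MeasureTheory.integral_Ioc_eq_integral_Ioo,
      ← intervalIntegral.integral_of_le (le_of_lt ha)]
    have key : (∫ x in (0:ℝ)..a, (1/B) * (Real.tan b * Real.cos (B*x) - Real.sin (B*x)))
        = (fun y => (1/B^2) * (Real.tan b * Real.sin (B*y) + Real.cos (B*y))) a
          - (fun y => (1/B^2) * (Real.tan b * Real.sin (B*y) + Real.cos (B*y))) 0 := by
      apply intervalIntegral.integral_eq_sub_of_hasDerivAt
      · intro x _
        have h1 : HasDerivAt (fun y : ℝ => B*y) B x := by simpa using (hasDerivAt_id x).const_mul B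
        have h2 := ((h1.sin.const_mul (Real.tan b)).add h1.cos).const_mul (1/B^2)
        convert h2 using 1
        · rfl
        · rfl
        · field_simp
          ring
      · apply Continuous.intervalIntegrable
        fun_prop
    rw [key]
    have hba : B * a = b := by rw [hb_def]; ring
    simp only [hba, mul_zero, Real.sin_zero, Real.cos_zero]
    ring
  -- left-side integral
  have hInt1 : (∫ x in Set.Ioo (-a) 0, -(s/B) * Real.cos (s*B*x) * (Real.tan (s*B*x) + Real.tan c))
      = (1/B^2) * (1 - Real.cos c - Real.tan c * Real.sin c) := by
    have hx0ae : ∀ᵐ (x:ℝ), x ∉ ({(-(π/2))/(s*B)} : Set ℝ) :=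
      measure_eq_zero_iff_ae_notMem.mp Real.volume_singleton
    have hcong : (∫ x in Set.Ioo (-a) 0, -(s/B) * Real.cos (s*B*x) * (Real.tan (s*B*x) + Real.tan c))
        = ∫ x in Set.Ioo (-a) 0, -(s/B) * (Real.sin (s*B*x) + Real.cos (s*B*x) * Real.tan c) := by
      refine MeasureTheory.setIntegral_congr_ae measurableSet_Ioo ?_
      filter_upwards [hx0ae] with x hx hmemx
      obtain ⟨hx1, hx2⟩ := hmemx
      have hsBa : s*B*(-a) = -c := by rw [hc_def, hb_def]; ring
      have hθ1 : -π < s*B*x := by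
        have := mul_lt_mul_of_pos_left hx1 hsB
        rw [hsBa] at this
        linarith
      have hθ2 : s*B*x < 0 := mul_neg_of_pos_of_neg hsB hx2
      have hcosne : Real.cos (s*B*x) ≠ 0 := by
        intro h0
        rw [Real.cos_eq_zero_iff] at h0
        obtain ⟨k, hk⟩ := h0
        have hπ : 0 < π := by linarith
        rw [hk] at hθ1 hθ2
        have h1 : (-2:ℝ) < 2*(k:ℝ)+1 := by
          by_contra h'
          push_neg at h'
          have := mul_le_mul_of_nonneg_right h' (by linarith : (0:ℝ) ≤ π/2)
          linarith
        have h2 : (2*(k:ℝ)+1:ℝ) < 0 := by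
          by_contra h'
          push_neg at h'
          have := mul_le_mul_of_nonneg_right h' (by linarith : (0:ℝ) ≤ π/2)
          linarith
        have h1' : (-2:ℤ) < 2*k+1 := by exact_mod_cast h1
        have h2' : (2*k+1:ℤ) < 0 := by exact_mod_cast h2
        have hk1 : k = -1 := by omega
        rw [hk1] at hk
        apply hx
        simp only [Set.mem_singleton_iff]
        rw [eq_div_iff (ne_of_gt hsB)]
        push_cast at hk
        linear_combination hk
      rw [Real.tan_eq_sin_div_cos (s*B*x)]
      field_simp
    rw [hcong, ← MeasureTheory.integral_Ioc_eq_integral_Ioo,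
      ← intervalIntegral.integral_of_le (by linarith : -a ≤ 0)]
    have key : (∫ x in (-a:ℝ)..0, -(s/B) * (Real.sin (s*B*x) + Real.cos (s*B*x) * Real.tan c))
        = (fun y => (1/B^2) * (Real.cos (s*B*y) - Real.tan c * Real.sin (s*B*y))) 0
          - (fun y => (1/B^2) * (Real.cos (s*B*y) - Real.tan c * Real.sin (s*B*y))) (-a) := by
      apply intervalIntegral.integral_eq_sub_of_hasDerivAt
        (f := fun y => (1/B^2) * (Real.cos (s*B*y) - Real.tan c * Real.sin (s*B*y)))
      · intro x _
        have h1 : HasDerivAt (fun y : ℝ => s*B*y) (s*B) x := by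
          simpa using (hasDerivAt_id x).const_mul (s*B)
        have h2 := ((h1.cos.sub (h1.sin.const_mul (Real.tan c))).const_mul (1/B^2))
        convert h2 using 1
        · rfl
        · rfl
        · field_simp
          ring
      · apply Continuous.intervalIntegrable
        fun_prop
    rw [key]
    have hma : s * B * (-a) = -c := by rw [hc_def, hb_def]; ring
    simp only [hma, mul_zero, Real.sin_zero, Real.cos_zero, Real.cos_neg, Real.sin_neg]
    ring
  rw [hInt1, hInt2]
  exact final_algebra B b c hB hsl hsu hcosb_pos hcosc_neg hu_lo hu_hi hv_lo
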